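/- arXiv:2208.07006 — 2 statements merged into one kernel-verified Lean document; each statement's English description precedes it below -/
import Mathlib

section
/- Löb's theorem: If a theory S (extending Peano Arithmetic with a provability predicate Box satisfying the Hilbert–Bernays–Löb derivability conditions) proves Box(C) → C for a sentence C, then S proves C. -/
/-- An abstract theory `S` extending Peano Arithmetic, presented via its set of
formulas, implication, falsum, a provability-predicate formula constructor `box`,
and a provability judgement `Prov`.  The fields record: a complete Hilbert-style
propositional base, modus ponens, the Hilbert–Bernays–Löb derivability conditions
D1–D3, and the diagonal (fixed point) lemma for contexts of the form
`Box(x) → C` (available since `S` extends PA). -/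
structure HBLTheory where
  Fml : Type
  imp : Fml → Fml → Fml
  bot : Fml
  box : Fml → Fml
  Prov : Fml → Prop
  -- propositional Hilbert axioms
  ax1 : ∀ p q : Fml, Prov (imp p (imp q p))
  ax2 : ∀ p q r : Fml, Prov (imp (imp p (imp q r)) (imp (imp p q) (imp p r)))
  ax3 : ∀ p : Fml, Prov (imp (imp (imp p bot) bot) p)
  -- modus ponens
  mp : ∀ p q : Fml, Prov (imp p q) → Prov p → Prov q
  -- Hilbert–Bernays–Löb derivability conditions
  d1 : ∀ p : Fml, Prov p → Prov (box p)
  d2 : ∀ p q : Fml, Prov (imp (box (imp p q)) (imp (box p) (box q)))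
  d3 : ∀ p : Fml, Prov (imp (box p) (box (box p)))
  -- diagonal lemma instance for the contexts needed in Löb's theorem:
  -- for each sentence C there is Ψ with S ⊢ Ψ ↔ (Box(Ψ) → C)
  diag : ∀ C : Fml, ∃ Ψ : Fml,
    Prov (imp Ψ (imp (box Ψ) C)) ∧ Prov (imp (imp (box Ψ) C) Ψ)

/-- **Löb's theorem**: if `S ⊢ Box(C) → C` then `S ⊢ C`. -/
theorem lob_theorem (S : HBLTheory) (C : S.Fml)
    (h : S.Prov (S.imp (S.box C) C)) : S.Prov C := by
  -- syllogism: from ⊢ a→b and ⊢ b→c infer ⊢ a→c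
  have syl : ∀ a b c : S.Fml, S.Prov (S.imp a b) → S.Prov (S.imp b c) →
      S.Prov (S.imp a c) := by
    intro a b c hab hbc
    have h1 : S.Prov (S.imp a (S.imp b c)) := S.mp _ _ (S.ax1 _ _) hbc
    exact S.mp _ _ (S.mp _ _ (S.ax2 a b c) h1) hab
  obtain ⟨Ψ, hΨ1, hΨ2⟩ := S.diag C
  -- ⊢ □(Ψ → (□Ψ → C))
  have h2 : S.Prov (S.box (S.imp Ψ (S.imp (S.box Ψ) C))) := S.d1 _ hΨ1
  -- ⊢ □Ψ → □(□Ψ → C)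
  have h3 : S.Prov (S.imp (S.box Ψ) (S.box (S.imp (S.box Ψ) C))) :=
    S.mp _ _ (S.d2 _ _) h2
  -- ⊢ □Ψ → (□□Ψ → □C)
  have h4 : S.Prov (S.imp (S.box Ψ) (S.imp (S.box (S.box Ψ)) (S.box C))) :=
    syl _ _ _ h3 (S.d2 _ _)
  -- ⊢ □Ψ → □C
  have h5 : S.Prov (S.imp (S.box Ψ) (S.box C)) :=
    S.mp _ _ (S.mp _ _ (S.ax2 _ _ _) h4) (S.d3 Ψ)
  -- ⊢ □Ψ → C
  have h6 : S.Prov (S.imp (S.box Ψ) C) := syl _ _ _ h5 h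
  -- ⊢ Ψ
  have h7 : S.Prov Ψ := S.mp _ _ hΨ2 h6
  -- ⊢ □Ψ, hence ⊢ C
  exact S.mp _ _ h6 (S.d1 _ h7)
end

section
/- Converse well-foundedness is forced by Löb's axiom: any Kripke frame (W, R) on which Löb's axiom □(□p → p) → □p is valid (for all valuations) must have R transitive and converse well-founded. -/
/-- Propositional modal formulas over a type of atoms. -/
inductive ModalFormula (α : Type) : Type
  | var : α → ModalFormula α
  | falsum : ModalFormula α
  | imp : ModalFormula α → ModalFormula α → ModalFormula α
  | box : ModalFormula α → ModalFormula α

/-- Kripke satisfaction. -/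
def Satisfies {α : Type} {W : Type} (R : W → W → Prop) (V : α → W → Prop) :
    W → ModalFormula α → Prop
  | w, ModalFormula.var a => V a w
  | _, ModalFormula.falsum => False
  | w, ModalFormula.imp p q => Satisfies R V w p → Satisfies R V w q
  | w, ModalFormula.box p => ∀ v, R w v → Satisfies R V v p

/-- Löb's axiom `□(□p → p) → □p` with `p` a fixed atom. -/
def lobFormula : ModalFormula Unit :=
  ModalFormula.imp
    (ModalFormula.box
      (ModalFormula.imp (ModalFormula.box (ModalFormula.var ()))
        (ModalFormula.var ())))
    (ModalFormula.box (ModalFormula.var ()))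

/-- **Converse well-foundedness is forced by Löb's axiom**: if Löb's axiom is
valid on a Kripke frame `(W, R)` (true at every world under every valuation),
then `R` is transitive and has no infinite ascending chain. -/
theorem lob_forces_transitive_cwf {W : Type} (R : W → W → Prop)
    (hvalid : ∀ (V : Unit → W → Prop) (w : W), Satisfies R V w lobFormula) :
    Transitive R ∧ ¬ ∃ f : ℕ → W, ∀ n, R (f n) (f (n + 1)) := by
  constructor
  · intro a b c hab hbc
    have h := hvalid (fun _ x => R a x ∧ ∀ y, R x y → R a y) a
    simp only [lobFormula, Satisfies] at h
    have := (h (fun x hx hbox => ⟨hx, fun y hy => (hbox y hy).1⟩) b hab).2 c hbc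
    exact this
  · rintro ⟨f, hf⟩
    have h := hvalid (fun _ x => ∀ n, x ≠ f n) (f 0)
    simp only [lobFormula, Satisfies] at h
    have hbox : ∀ v, R (f 0) v → ∀ n, v ≠ f n := by
      apply h
      intro x hx hboxp n hxn
      subst hxn
      exact hboxp (f (n+1)) (hf n) (n+1) rfl
    exact hbox (f 1) (hf 0) 1 rfl
end
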